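/- arXiv:2201.13004 — 2 statements merged into one kernel-verified Lean document; each statement's English description precedes it below -/
import Mathlib

section
/- Suppose 0 < n₁(s) < n(s) for every s ∈ 𝒮 with n(s) > 0. Then for every m : {0,1}×𝒮×ℝ^d → ℝ and every c : {0,1}×𝒮 → ℝ, G(m′) = G(m), where m′(a,s,x) := m(a,s,x) + c(a,s). Consequently, the doubly robust adjusted LATE estimator, which is a ratio of two such functionals (one built from the outcomes Y_i and one from the treatments), is numerically invariant to stratum-specific location shifts of the regression adjustments. -/
/-!
Shifting `m a s` by `c a s` changes the summand of unit `i` by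
`c 1 (S i) * (1 - A i / π̂ (S i)) - c 0 (S i) * (1 - (1 - A i) / (1 - π̂ (S i)))`.
Since `π̂ s` is exactly the treated share of stratum `s`, summing an indicator of treatment
against a function of the stratum is the same as summing `π̂` against it; hence the
inverse-propensity weights `A i / π̂ (S i)` and `(1 - A i) / (1 - π̂ (S i))` each sum to the
stratum size within every stratum, and both contributions vanish.
-/

open Finset

section StratumShare

variable {ι σ : Type*} [Fintype ι] [DecidableEq σ] (S : ι → σ) (T : ι → Bool) (p : σ → ℝ)

theorem sum_indicator_mul_eq_sum_share_mul
    (hp : ∀ i, p (S i) * #{j | S j = S i} = #{j | T j = true ∧ S j = S i}) (g : σ → ℝ) :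
    ∑ i, (if T i then (1 : ℝ) else 0) * g (S i) = ∑ i, p (S i) * g (S i) := by
  have hS : ∀ i ∈ univ, S i ∈ univ.image S := fun i _ => mem_image_of_mem S (mem_univ i)
  rw [← sum_fiberwise_of_maps_to hS, ← sum_fiberwise_of_maps_to hS]
  refine sum_congr rfl fun s hs => ?_
  obtain ⟨i, -, rfl⟩ := mem_image.mp hs
  calc ∑ j with S j = S i, (if T j then (1 : ℝ) else 0) * g (S j)
      = ∑ j with S j = S i, (if T j then (1 : ℝ) else 0) * g (S i) :=
        sum_congr rfl fun j hj => by rw [(mem_filter.mp hj).2]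
    _ = #{j | T j = true ∧ S j = S i} * g (S i) := by
        rw [← sum_mul, sum_boole, filter_filter]
        simp_rw [and_comm]
    _ = ∑ j with S j = S i, p (S i) * g (S i) := by
        rw [sum_const, nsmul_eq_mul, ← hp i]
        ring
    _ = ∑ j with S j = S i, p (S j) * g (S j) :=
        sum_congr rfl fun j hj => by rw [(mem_filter.mp hj).2]

theorem sum_compl_indicator_mul_eq_sum_compl_share_mul
    (hp : ∀ i, p (S i) * #{j | S j = S i} = #{j | T j = true ∧ S j = S i}) (g : σ → ℝ) :
    ∑ i, (1 - if T i then (1 : ℝ) else 0) * g (S i) = ∑ i, (1 - p (S i)) * g (S i) := by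
  simp only [sub_mul, one_mul, sum_sub_distrib, sum_indicator_mul_eq_sum_share_mul S T p hp]

theorem sum_indicator_mul_div_share
    (hp : ∀ i, p (S i) * #{j | S j = S i} = #{j | T j = true ∧ S j = S i})
    (hp0 : ∀ i, p (S i) ≠ 0) (w : σ → ℝ) :
    ∑ i, (if T i then (1 : ℝ) else 0) * w (S i) / p (S i) = ∑ i, w (S i) := by
  simp_rw [mul_div_assoc]
  rw [sum_indicator_mul_eq_sum_share_mul S T p hp fun s => w s / p s]
  exact sum_congr rfl fun i _ => mul_div_cancel₀ _ (hp0 i)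

theorem sum_compl_indicator_mul_div_compl_share
    (hp : ∀ i, p (S i) * #{j | S j = S i} = #{j | T j = true ∧ S j = S i})
    (hp1 : ∀ i, 1 - p (S i) ≠ 0) (w : σ → ℝ) :
    ∑ i, (1 - if T i then (1 : ℝ) else 0) * w (S i) / (1 - p (S i)) = ∑ i, w (S i) := by
  simp_rw [mul_div_assoc]
  rw [sum_compl_indicator_mul_eq_sum_compl_share_mul S T p hp fun s => w s / (1 - p s)]
  exact sum_congr rfl fun i _ => mul_div_cancel₀ _ (hp1 i)

end StratumShare

theorem stmt1_general {n : ℕ} {𝒮 : Type*} [DecidableEq 𝒮] {d : ℕ}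
    (A : Fin n → Bool) (S : Fin n → 𝒮) (X : Fin n → (Fin d → ℝ)) (Y D : Fin n → ℝ)
    (nTot n1 piHat : 𝒮 → ℝ)
    (hnTot : ∀ s, nTot s = ((univ.filter fun i => S i = s).card : ℝ))
    (hn1 : ∀ s, n1 s = ((univ.filter fun i => A i = true ∧ S i = s).card : ℝ))
    (hpiHat : ∀ s, piHat s = n1 s / nTot s)
    (hpos : ∀ s, 0 < nTot s → 0 < n1 s ∧ n1 s < nTot s)
    (G : (Fin n → ℝ) → (Bool → 𝒮 → (Fin d → ℝ) → ℝ) → ℝ)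
    (hG : ∀ (V : Fin n → ℝ) (m : Bool → 𝒮 → (Fin d → ℝ) → ℝ),
      G V m =
        ∑ i, ((if A i then (1 : ℝ) else 0) * (V i - m true (S i) (X i)) / piHat (S i)
          - (1 - if A i then (1 : ℝ) else 0) * (V i - m false (S i) (X i))
              / (1 - piHat (S i))
          + m true (S i) (X i) - m false (S i) (X i))) :
    (∀ (V : Fin n → ℝ) (m : Bool → 𝒮 → (Fin d → ℝ) → ℝ) (c : Bool → 𝒮 → ℝ),
        G V (fun a s x => m a s x + c a s) = G V m) ∧
    (∀ (mY mD : Bool → 𝒮 → (Fin d → ℝ) → ℝ) (cY cD : Bool → 𝒮 → ℝ),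
        (G D (fun a s x => mD a s x + cD a s))⁻¹ * G Y (fun a s x => mY a s x + cY a s)
          = (G D mD)⁻¹ * G Y mY) := by
  have hnTot_pos : ∀ i, 0 < nTot (S i) := fun i => by
    rw [hnTot, Nat.cast_pos, card_pos]
    exact ⟨i, mem_filter.mpr ⟨mem_univ i, rfl⟩⟩
  have hshare : ∀ i, piHat (S i) * #{j | S j = S i} = #{j | A j = true ∧ S j = S i} :=
    fun i => by rw [hpiHat, ← hnTot, ← hn1, div_mul_cancel₀ _ (hnTot_pos i).ne']
  have hpiHat_mem : ∀ i, 0 < piHat (S i) ∧ piHat (S i) < 1 := fun i => by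
    obtain ⟨h0, h1⟩ := hpos _ (hnTot_pos i)
    rw [hpiHat]
    exact ⟨div_pos h0 (hnTot_pos i), (div_lt_one (hnTot_pos i)).mpr h1⟩
  have hshift : ∀ V m (c : Bool → 𝒮 → ℝ), G V (fun a s x => m a s x + c a s) = G V m := by
    intro V m c
    rw [← sub_eq_zero, hG, hG, ← sum_sub_distrib]
    calc _ = ∑ i, (c true (S i) - c false (S i))
            - ∑ i, (if A i then (1 : ℝ) else 0) * c true (S i) / piHat (S i)
            + ∑ i, (1 - if A i then (1 : ℝ) else 0) * c false (S i) / (1 - piHat (S i)) := by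
          rw [← sum_sub_distrib, ← sum_add_distrib]
          exact sum_congr rfl fun i _ => by ring
      _ = 0 := by
          rw [sum_indicator_mul_div_share S A piHat hshare (fun i => (hpiHat_mem i).1.ne'),
            sum_compl_indicator_mul_div_compl_share S A piHat hshare
              (fun i => sub_ne_zero.mpr (hpiHat_mem i).2.ne'), sum_sub_distrib]
          ring
  exact ⟨hshift, fun mY mD cY cD => by rw [hshift, hshift]⟩

/-- The doubly robust functional `G` built from inverse-`π̂` weights is
numerically invariant to stratum-specific location shifts `c a s` of the regression
adjustment `m a s x` (where `a = true` codes arm `1` and `a = false` codes arm `0`).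
Consequently the adjusted LATE estimator, a ratio of two such functionals (one built from
the outcomes `Y` and one from the treatments `D`), is invariant to such shifts. -/
theorem stmt1 {n : ℕ} {𝒮 : Type*} [Fintype 𝒮] [DecidableEq 𝒮] {d : ℕ}
    (A : Fin n → Bool) (S : Fin n → 𝒮) (X : Fin n → (Fin d → ℝ)) (Y D : Fin n → ℝ)
    (nTot n1 piHat : 𝒮 → ℝ)
    (hnTot : ∀ s, nTot s = ((univ.filter fun i => S i = s).card : ℝ))
    (hn1 : ∀ s, n1 s = ((univ.filter fun i => A i = true ∧ S i = s).card : ℝ))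
    (hpiHat : ∀ s, piHat s = n1 s / nTot s)
    (hpos : ∀ s, 0 < nTot s → 0 < n1 s ∧ n1 s < nTot s)
    (G : (Fin n → ℝ) → (Bool → 𝒮 → (Fin d → ℝ) → ℝ) → ℝ)
    (hG : ∀ (V : Fin n → ℝ) (m : Bool → 𝒮 → (Fin d → ℝ) → ℝ),
      G V m =
        ∑ i, ((if A i then (1 : ℝ) else 0) * (V i - m true (S i) (X i)) / piHat (S i)
          - (1 - if A i then (1 : ℝ) else 0) * (V i - m false (S i) (X i))
              / (1 - piHat (S i))
          + m true (S i) (X i) - m false (S i) (X i))) :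
    (∀ (V : Fin n → ℝ) (m : Bool → 𝒮 → (Fin d → ℝ) → ℝ) (c : Bool → 𝒮 → ℝ),
        G V (fun a s x => m a s x + c a s) = G V m) ∧
    (∀ (mY mD : Bool → 𝒮 → (Fin d → ℝ) → ℝ) (cY cD : Bool → 𝒮 → ℝ),
        (G D (fun a s x => mD a s x + cD a s))⁻¹ * G Y (fun a s x => mY a s x + cY a s)
          = (G D mD)⁻¹ * G Y mY) :=
  stmt1_general A S X Y D nTot n1 piHat hnTot hn1 hpiHat hpos G hG
end

section
/- The set of global minimizers of (t,b) ↦ σ²_lin(t,b) over all coefficient collections (t_{a,s}, b_{a,s})_{a∈{0,1},s∈𝒮} ⊂ ℝ^k is exactly the set of (t*, b*) such that for every s ∈ 𝒮, √((1−π(s))/π(s))·(t*_{1,s} − τ·b*_{1,s}) + √(π(s)/(1−π(s)))·(t*_{0,s} − τ·b*_{0,s}) = √((1−π(s))/π(s))·(θ^L_{1,s} − τ·β^L_{1,s}) + √(π(s)/(1−π(s)))·(θ^L_{0,s} − τ·β^L_{0,s}). In particular (θ^L, β^L) is a minimizer. -/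
open MeasureTheory ProbabilityTheory Finset

noncomputable section

/-- Population data for a covariate-adaptive randomization (CAR) design:
potential outcomes `Y1, Y0`, potential treatment take-ups `D1, D0` (valued in `{0,1}`),
covariates `X`, stratum `S`, and target assignment probabilities `piS`. -/
structure CARPop (Ω : Type*) [MeasurableSpace Ω] (𝒮 : Type*) [MeasurableSpace 𝒮]
    (d : ℕ) where
  P : Measure Ω
  Y1 : Ω → ℝ
  Y0 : Ω → ℝ
  D1 : Ω → ℝ
  D0 : Ω → ℝ
  X : Ω → Fin d → ℝ
  S : Ω → 𝒮
  piS : 𝒮 → ℝ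

namespace CARPop

variable {Ω : Type*} [MeasurableSpace Ω] {𝒮 : Type*} [MeasurableSpace 𝒮] {d : ℕ}

/-- Potential treatment take-up `D(a)`, with `a : Bool` (`true` = assigned to treatment). -/
def Da (c : CARPop Ω 𝒮 d) (a : Bool) : Ω → ℝ := if a then c.D1 else c.D0

/-- `Y(D(a)) = Y(1)·D(a) + Y(0)·(1 − D(a))`. -/
def Ya (c : CARPop Ω 𝒮 d) (a : Bool) : Ω → ℝ :=
  fun ω => c.Y1 ω * c.Da a ω + c.Y0 ω * (1 - c.Da a ω)

/-- `W = Y(D(1))`. -/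
def W (c : CARPop Ω 𝒮 d) : Ω → ℝ := c.Ya true

/-- `Z = Y(D(0))`. -/
def Z (c : CARPop Ω 𝒮 d) : Ω → ℝ := c.Ya false

/-- The compliers event `{D(1) > D(0)}`. -/
def compliers (c : CARPop Ω 𝒮 d) : Set Ω := {ω | c.D0 ω < c.D1 ω}

/-- The LATE `τ = E[Y(1) − Y(0) | D(1) > D(0)]`. -/
def tau (c : CARPop Ω 𝒮 d) : ℝ :=
  (∫ ω in c.compliers, (c.Y1 ω - c.Y0 ω) ∂c.P) / (c.P c.compliers).toReal

/-- The stratum event `{S = s}`. -/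
def stratum (c : CARPop Ω 𝒮 d) (s : 𝒮) : Set Ω := {ω | c.S ω = s}

/-- Conditional expectation given `S = s`: `E[f | S = s]`. -/
def cEs (c : CARPop Ω 𝒮 d) (s : 𝒮) (f : Ω → ℝ) : ℝ :=
  (∫ ω in c.stratum s, f ω ∂c.P) / (c.P (c.stratum s)).toReal

/-- Conditional expectation given `S`, i.e. `E[f | S]` as the function `ω ↦ E[f | S = S ω]`. -/
def cES (c : CARPop Ω 𝒮 d) (f : Ω → ℝ) : Ω → ℝ := fun ω => c.cEs (c.S ω) f

/-- Centering at the conditional mean given `S`:  `f − E[f | S]`. -/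
def tilt (c : CARPop Ω 𝒮 d) (f : Ω → ℝ) : Ω → ℝ := fun ω => f ω - c.cES f ω

/-- A working model `m(a, s, x)` evaluated along `(S, X)`. -/
def wm (c : CARPop Ω 𝒮 d) (m : Bool → 𝒮 → (Fin d → ℝ) → ℝ) (a : Bool) : Ω → ℝ :=
  fun ω => m a (c.S ω) (c.X ω)

/-- Square-integrability bound for a working model: `E[(m(a,S,X))² | S = s] ≤ C < ∞`. -/
def WMBound (c : CARPop Ω 𝒮 d) (m : Bool → 𝒮 → (Fin d → ℝ) → ℝ) : Prop :=
  (∀ a : Bool, Measurable (fun ω => m a (c.S ω) (c.X ω))) ∧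
    ∃ C : ℝ, ∀ (a : Bool) (s : 𝒮), c.cEs s (fun ω => (m a (c.S ω) (c.X ω)) ^ 2) ≤ C

/-- Influence term `Ξ₁` of the adjusted LATE estimator with working models `mY, mD`. -/
def Xi1 (c : CARPop Ω 𝒮 d) (mY mD : Bool → 𝒮 → (Fin d → ℝ) → ℝ) : Ω → ℝ := fun ω =>
  ((1 - 1 / c.piS (c.S ω)) * c.tilt (c.wm mY true) ω - c.tilt (c.wm mY false) ω
      + c.tilt c.W ω / c.piS (c.S ω))
    - c.tau * ((1 - 1 / c.piS (c.S ω)) * c.tilt (c.wm mD true) ω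
        - c.tilt (c.wm mD false) ω + c.tilt (c.Da true) ω / c.piS (c.S ω))

/-- Influence term `Ξ₀` of the adjusted LATE estimator with working models `mY, mD`. -/
def Xi0 (c : CARPop Ω 𝒮 d) (mY mD : Bool → 𝒮 → (Fin d → ℝ) → ℝ) : Ω → ℝ := fun ω =>
  ((1 / (1 - c.piS (c.S ω)) - 1) * c.tilt (c.wm mY false) ω + c.tilt (c.wm mY true) ω
      - c.tilt c.Z ω / (1 - c.piS (c.S ω)))
    - c.tau * ((1 / (1 - c.piS (c.S ω)) - 1) * c.tilt (c.wm mD false) ω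
        + c.tilt (c.wm mD true) ω - c.tilt (c.Da false) ω / (1 - c.piS (c.S ω)))

/-- Influence term `Ξ₂` (between-strata variation). -/
def Xi2 (c : CARPop Ω 𝒮 d) : Ω → ℝ := fun ω =>
  (c.cES (fun ω' => c.W ω' - c.Z ω') ω - ∫ ω', (c.W ω' - c.Z ω') ∂c.P)
    - c.tau * (c.cES (fun ω' => c.Da true ω' - c.Da false ω') ω
        - ∫ ω', (c.Da true ω' - c.Da false ω') ∂c.P)

/-- `σ₁² = E[π(S)·Ξ₁²]`. -/
def sigma1Sq (c : CARPop Ω 𝒮 d) (mY mD : Bool → 𝒮 → (Fin d → ℝ) → ℝ) : ℝ :=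
  ∫ ω, c.piS (c.S ω) * (c.Xi1 mY mD ω) ^ 2 ∂c.P

/-- `σ₀² = E[(1 − π(S))·Ξ₀²]`. -/
def sigma0Sq (c : CARPop Ω 𝒮 d) (mY mD : Bool → 𝒮 → (Fin d → ℝ) → ℝ) : ℝ :=
  ∫ ω, (1 - c.piS (c.S ω)) * (c.Xi0 mY mD ω) ^ 2 ∂c.P

/-- `σ₂² = E[Ξ₂²]`. -/
def sigma2Sq (c : CARPop Ω 𝒮 d) : ℝ := ∫ ω, (c.Xi2 ω) ^ 2 ∂c.P

/-- Asymptotic variance `σ² = (σ₁² + σ₀² + σ₂²)/P(D(1) > D(0))²` of the adjusted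
LATE estimator with working models `mY, mD`. -/
def sigmaSq (c : CARPop Ω 𝒮 d) (mY mD : Bool → 𝒮 → (Fin d → ℝ) → ℝ) : ℝ :=
  (c.sigma1Sq mY mD + c.sigma0Sq mY mD + c.sigma2Sq) / (c.P c.compliers).toReal ^ 2

/-- The population-level assumptions of the CAR setup (Assumption 1 of the paper). -/
structure PopAssumptions (c : CARPop Ω 𝒮 d) : Prop where
  prob : IsProbabilityMeasure c.P
  mY1 : Measurable c.Y1
  mY0 : Measurable c.Y0
  mD1 : Measurable c.D1
  mD0 : Measurable c.D0
  mX : Measurable c.X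
  mS : Measurable c.S
  d1Bin : ∀ ω, c.D1 ω = 0 ∨ c.D1 ω = 1
  d0Bin : ∀ ω, c.D0 ω = 0 ∨ c.D0 ω = 1
  noDefiers : c.P {ω | c.D1 ω = 0 ∧ c.D0 ω = 1} = 0
  compliersPos : 0 < c.P c.compliers
  strataPos : ∀ s, 0 < c.P (c.stratum s)
  piRange : ∃ cc : ℝ, 0 < cc ∧ cc < 1 / 2 ∧ ∀ s, cc < c.piS s ∧ c.piS s < 1 - cc
  momentY : ∃ q C : ℝ, 4 ≤ q ∧ ∀ s,
    c.cEs s (fun ω => |c.Y1 ω| ^ q) ≤ C ∧ c.cEs s (fun ω => |c.Y0 ω| ^ q) ≤ C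
  intY1sq : Integrable (fun ω => c.Y1 ω ^ 2) c.P
  intY0sq : Integrable (fun ω => c.Y0 ω ^ 2) c.P

section Linear

variable {ι : Type*} [Fintype ι] [DecidableEq ι]

/-- Centered regressor `Ψ̃ₛ = Ψₛ(X) − E[Ψₛ(X) | S = s]`. -/
def psiTilt (c : CARPop Ω 𝒮 d) (Ψ : 𝒮 → (Fin d → ℝ) → ι → ℝ) (s : 𝒮) : Ω → ι → ℝ :=
  fun ω j => Ψ s (c.X ω) j - c.cEs s (fun ω' => Ψ s (c.X ω') j)

/-- Within-stratum Gram matrix `E[Ψ̃ₛΨ̃ₛᵀ | S = s]`. -/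
def gram (c : CARPop Ω 𝒮 d) (Ψ : 𝒮 → (Fin d → ℝ) → ι → ℝ) (s : 𝒮) : Matrix ι ι ℝ :=
  Matrix.of fun i j => c.cEs s (fun ω => c.psiTilt Ψ s ω i * c.psiTilt Ψ s ω j)

/-- Optimal linear coefficient `θᴸ(a,s) = (E[Ψ̃Ψ̃ᵀ|S=s])⁻¹ E[Ψ̃·Y(D(a)) | S=s]`. -/
def thetaL (c : CARPop Ω 𝒮 d) (Ψ : 𝒮 → (Fin d → ℝ) → ι → ℝ) (a : Bool) (s : 𝒮) : ι → ℝ :=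
  Matrix.mulVec (c.gram Ψ s)⁻¹ (fun j => c.cEs s (fun ω => c.psiTilt Ψ s ω j * c.Ya a ω))

/-- Optimal linear coefficient `βᴸ(a,s) = (E[Ψ̃Ψ̃ᵀ|S=s])⁻¹ E[Ψ̃·D(a) | S=s]`. -/
def betaL (c : CARPop Ω 𝒮 d) (Ψ : 𝒮 → (Fin d → ℝ) → ι → ℝ) (a : Bool) (s : 𝒮) : ι → ℝ :=
  Matrix.mulVec (c.gram Ψ s)⁻¹ (fun j => c.cEs s (fun ω => c.psiTilt Ψ s ω j * c.Da a ω))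

/-- Linear working model `x ↦ Ψₛ(x)ᵀ t(a,s)`. -/
def linWM (Ψ : 𝒮 → (Fin d → ℝ) → ι → ℝ) (t : Bool → 𝒮 → ι → ℝ) :
    Bool → 𝒮 → (Fin d → ℝ) → ℝ :=
  fun a s x => ∑ j, Ψ s x j * t a s j

/-- Asymptotic variance of the LATE estimator with linear adjustments
`μ̄ʸ(a,s,x) = Ψₛ(x)ᵀ t(a,s)` and `μ̄ᴰ(a,s,x) = Ψₛ(x)ᵀ b(a,s)`. -/
def sigmaSqLin (c : CARPop Ω 𝒮 d) (Ψ : 𝒮 → (Fin d → ℝ) → ι → ℝ)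
    (t b : Bool → 𝒮 → ι → ℝ) : ℝ :=
  c.sigmaSq (linWM Ψ t) (linWM Ψ b)

/-- Regularity of the regressor `Ψ`: measurability, a conditional moment bound of
order `q > 2`, and eigenvalues of the within-stratum Gram matrices of the centered
regressor bounded away from `0` and `∞`. -/
def PsiRegular (c : CARPop Ω 𝒮 d) (Ψ : 𝒮 → (Fin d → ℝ) → ι → ℝ) : Prop :=
  (∀ s, Measurable (Ψ s)) ∧
  (∃ q C : ℝ, 2 < q ∧ ∀ s,
      c.cEs s (fun ω => (∑ j, (Ψ (c.S ω) (c.X ω) j) ^ 2) ^ (q / 2)) ≤ C) ∧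
  (∃ c' C' : ℝ, 0 < c' ∧ c' ≤ C' ∧ ∀ s, ∀ v : ι → ℝ,
      c' * (∑ j, v j ^ 2) ≤ (∑ j, v j * Matrix.mulVec (c.gram Ψ s) v j) ∧
        (∑ j, v j * Matrix.mulVec (c.gram Ψ s) v j) ≤ C' * (∑ j, v j ^ 2))

end Linear

end CARPop
/-!
Within a stratum `s` the linearly adjusted influence terms depend on the coefficients only
through the pooled vector `w_s = (1 - π(s)) (t₁ₛ - τ b₁ₛ) + π(s) (t₀ₛ - τ b₀ₛ)`: on `{S = s}`,
`π Ξ₁² = (R₁ - Ψ̃ᵀ w_s)² / π` and `(1 - π) Ξ₀² = (R₀ - Ψ̃ᵀ w_s)² / (1 - π)`, where `R_a` is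
`Y(D(a)) - τ D(a)` centred within the stratum. These are least-squares criteria, and the normal
equations `E[Ψ̃ R_a | S = s] = G_s (θᴸₐₛ - τ βᴸₐₛ)` hold for the Gram matrix `G_s`, which is
positive definite. Writing `wᴸ_s` for the pooled vector of `(θᴸ, βᴸ)`, completing the square gives
`σ²_lin(t, b) = σ²_lin(θᴸ, βᴸ)`
`  + Σ_s p(s) (w_s - wᴸ_s)ᵀ G_s (w_s - wᴸ_s) / (π(s) (1 - π(s)) P(D(1) > D(0))²)`,
so the minimizers are exactly the coefficients with `w_s = wᴸ_s` for every `s`. The condition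
in the theorem is this equation divided by `√(π(s) (1 - π(s)))`.
-/

open Matrix

theorem Real.sqrt_div_eq_div_sqrt_mul {a b : ℝ} (ha : 0 < a) (hb : 0 < b) :
    √(a / b) = a / √(a * b) := by
  rw [eq_div_iff (by positivity), ← Real.sqrt_mul (div_nonneg ha.le hb.le),
    show a / b * (a * b) = a ^ 2 by field_simp, Real.sqrt_sq ha.le]

section SqrtWeights

variable {E : Type*} [AddCommGroup E] [Module ℝ E] {p : ℝ}

theorem sqrt_div_smul_add_sqrt_div_smul (hp₀ : 0 < p) (hp₁ : p < 1) (u v : E) :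
    √((1 - p) / p) • u + √(p / (1 - p)) • v
      = (√(p * (1 - p)))⁻¹ • ((1 - p) • u + p • v) := by
  rw [Real.sqrt_div_eq_div_sqrt_mul (by linarith) hp₀,
    Real.sqrt_div_eq_div_sqrt_mul hp₀ (by linarith), mul_comm (1 - p) p, smul_add,
    smul_smul, smul_smul, div_eq_inv_mul, div_eq_inv_mul]

theorem sqrt_div_smul_add_sqrt_div_smul_eq_iff (hp₀ : 0 < p) (hp₁ : p < 1) (u v u' v' : E) :
    √((1 - p) / p) • u + √(p / (1 - p)) • v = √((1 - p) / p) • u' + √(p / (1 - p)) • v'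
      ↔ (1 - p) • u + p • v = (1 - p) • u' + p • v' := by
  have hr : (√(p * (1 - p)))⁻¹ ≠ 0 :=
    inv_ne_zero (Real.sqrt_pos.2 (mul_pos hp₀ (sub_pos.2 hp₁))).ne'
  rw [sqrt_div_smul_add_sqrt_div_smul hp₀ hp₁, sqrt_div_smul_add_sqrt_div_smul hp₀ hp₁,
    smul_right_inj hr]

end SqrtWeights

theorem Matrix.IsSymm.sub_dotProduct_mulVec_sub {ι R : Type*} [Fintype ι] [CommRing R]
    {A : Matrix ι ι R} (hA : A.IsSymm) (u v : ι → R) :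
    (u - v) ⬝ᵥ A *ᵥ (u - v) = u ⬝ᵥ A *ᵥ u - 2 * (u ⬝ᵥ A *ᵥ v) + v ⬝ᵥ A *ᵥ v := by
  have hvu : v ⬝ᵥ A *ᵥ u = u ⬝ᵥ A *ᵥ v := by
    rw [dotProduct_mulVec, ← mulVec_transpose, hA.eq, dotProduct_comm]
  simp only [mulVec_sub, sub_dotProduct, dotProduct_sub, hvu]
  ring

theorem ProbabilityTheory.integral_eq_sum_cond_fiber {Ω α E : Type*} [MeasurableSpace Ω]
    [Fintype α] [MeasurableSpace α] [DiscreteMeasurableSpace α]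
    [NormedAddCommGroup E] [NormedSpace ℝ E]
    {μ : Measure Ω} [IsFiniteMeasure μ] {X : Ω → α} (hX : Measurable X) {f : Ω → E}
    (hf : ∀ x, Integrable f μ[|X ← x]) :
    ∫ ω, f ω ∂μ = ∑ x, (μ (X ⁻¹' {x})).toReal • ∫ ω, f ω ∂μ[|X ← x] := by
  conv_lhs => rw [← sum_meas_smul_cond_fiber hX μ]
  rw [integral_finsetSum_measure fun x _ => (hf x).smul_measure (measure_ne_top _ _)]
  simp only [integral_smul_measure]

namespace MeasureTheory

theorem MemLp.cond {Ω E : Type*} [MeasurableSpace Ω] [NormedAddCommGroup E]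
    {μ : Measure Ω} {p : ENNReal} {f : Ω → E} (hf : MemLp f p μ) {s : Set Ω} (hs : μ s ≠ 0) :
    MemLp f p μ[|s] :=
  (hf.restrict s).smul_measure (ENNReal.inv_ne_top.2 hs)

variable {Ω ι : Type*} [MeasurableSpace Ω] [Fintype ι] {μ : Measure Ω}

theorem integral_dotProduct {ψ : Ω → ι → ℝ} (hψ : ∀ j, Integrable (fun ω => ψ ω j) μ)
    (w : ι → ℝ) : ∫ ω, ψ ω ⬝ᵥ w ∂μ = (fun j => ∫ ω, ψ ω j ∂μ) ⬝ᵥ w := by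
  simp only [dotProduct]
  rw [integral_finsetSum _ fun j _ => (hψ j).mul_const _]
  simp only [integral_mul_const]

theorem integral_mul_dotProduct {F : Ω → ℝ} {ψ : Ω → ι → ℝ}
    (hFψ : ∀ j, Integrable (fun ω => F ω * ψ ω j) μ) (w : ι → ℝ) :
    ∫ ω, F ω * (ψ ω ⬝ᵥ w) ∂μ = (fun j => ∫ ω, F ω * ψ ω j ∂μ) ⬝ᵥ w := by
  simpa only [smul_dotProduct, Pi.smul_apply, smul_eq_mul]
    using integral_dotProduct (ψ := fun ω => F ω • ψ ω) hFψ w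

theorem integral_sq_sub_dotProduct {F : Ω → ℝ} {ψ : Ω → ι → ℝ} (hF : MemLp F 2 μ)
    (hψ : ∀ j, MemLp (fun ω => ψ ω j) 2 μ) (w : ι → ℝ) :
    ∫ ω, (F ω - ψ ω ⬝ᵥ w) ^ 2 ∂μ
      = ∫ ω, F ω ^ 2 ∂μ - 2 * ((fun j => ∫ ω, F ω * ψ ω j ∂μ) ⬝ᵥ w)
        + w ⬝ᵥ (of fun i j => ∫ ω, ψ ω i * ψ ω j ∂μ) *ᵥ w := by
  have hψw : MemLp (fun ω => ψ ω ⬝ᵥ w) 2 μ :=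
    memLp_finsetSum _ fun j _ => (hψ j).mul_const (w j)
  have hsq : ∫ ω, (ψ ω ⬝ᵥ w) ^ 2 ∂μ = w ⬝ᵥ (of fun i j => ∫ ω, ψ ω i * ψ ω j ∂μ) *ᵥ w := by
    have hint : ∀ i, Integrable (fun ω => ψ ω i * (ψ ω ⬝ᵥ w)) μ := fun i =>
      (hψ i).integrable_mul hψw
    calc ∫ ω, (ψ ω ⬝ᵥ w) ^ 2 ∂μ = ∫ ω, ∑ i, w i * (ψ ω i * (ψ ω ⬝ᵥ w)) ∂μ := by
          congr 1 with ω
          rw [sq, dotProduct, sum_mul]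
          exact sum_congr rfl fun i _ => by ring
      _ = ∑ i, w i * ∫ ω, ψ ω i * (ψ ω ⬝ᵥ w) ∂μ := by
          rw [integral_finsetSum _ fun i _ => (hint i).const_mul (w i)]
          simp only [integral_const_mul]
      _ = _ := by
          simp only [integral_mul_dotProduct fun j => (hψ _).integrable_mul (hψ j)]
          rfl
  have hF2 := hF.integrable_sq
  have hFψw : Integrable (fun ω => 2 * (F ω * (ψ ω ⬝ᵥ w))) μ :=
    (hF.integrable_mul hψw).const_mul 2
  have hsub : Integrable (fun ω => F ω ^ 2 - 2 * (F ω * (ψ ω ⬝ᵥ w))) μ := hF2.sub hFψw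
  calc ∫ ω, (F ω - ψ ω ⬝ᵥ w) ^ 2 ∂μ
      = ∫ ω, F ω ^ 2 - 2 * (F ω * (ψ ω ⬝ᵥ w)) + (ψ ω ⬝ᵥ w) ^ 2 ∂μ := by
        congr 1 with ω
        ring
    _ = _ := by
        rw [integral_add hsub hψw.integrable_sq, integral_sub hF2 hFψw, hsq,
          integral_const_mul, integral_mul_dotProduct fun j => hF.integrable_mul (hψ j)]

end MeasureTheory

namespace CARPop

variable {Ω : Type*} [MeasurableSpace Ω] {𝒮 : Type*} [MeasurableSpace 𝒮] {d : ℕ}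
  {ι : Type*} {c : CARPop Ω 𝒮 d} {Ψ : 𝒮 → (Fin d → ℝ) → ι → ℝ}

theorem cEs_eq_integral_cond (s : 𝒮) (f : Ω → ℝ) :
    c.cEs s f = ∫ ω, f ω ∂c.P[|c.stratum s] := by
  rw [cEs, ProbabilityTheory.cond, integral_smul_measure, ENNReal.toReal_inv, smul_eq_mul,
    div_eq_inv_mul]

theorem piS_pos (hc : c.PopAssumptions) (s : 𝒮) : 0 < c.piS s := by
  obtain ⟨cc, hcc, -, hπ⟩ := hc.piRange
  linarith [(hπ s).1]

theorem piS_lt_one (hc : c.PopAssumptions) (s : 𝒮) : c.piS s < 1 := by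
  obtain ⟨cc, hcc, -, hπ⟩ := hc.piRange
  linarith [(hπ s).2]

theorem toReal_measure_stratum_pos (hc : c.PopAssumptions) (s : 𝒮) :
    0 < (c.P (c.stratum s)).toReal :=
  have := hc.prob
  ENNReal.toReal_pos (hc.strataPos s).ne' (measure_ne_top _ _)

theorem toReal_measure_compliers_pos (hc : c.PopAssumptions) : 0 < (c.P c.compliers).toReal :=
  have := hc.prob
  ENNReal.toReal_pos hc.compliersPos.ne' (measure_ne_top _ _)

theorem isProbabilityMeasure_cond_stratum (hc : c.PopAssumptions) (s : 𝒮) :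
    IsProbabilityMeasure c.P[|c.stratum s] :=
  have := hc.prob
  cond_isProbabilityMeasure (hc.strataPos s).ne'

theorem ae_cond_stratum [MeasurableSingletonClass 𝒮] (hc : c.PopAssumptions) (s : 𝒮) :
    ∀ᵐ ω ∂c.P[|c.stratum s], c.S ω = s :=
  ae_cond_mem (hc.mS (measurableSet_singleton s))

theorem Da_eq_zero_or_one (hc : c.PopAssumptions) (a : Bool) (ω : Ω) :
    c.Da a ω = 0 ∨ c.Da a ω = 1 := by
  cases a
  exacts [hc.d0Bin ω, hc.d1Bin ω]

theorem measurable_Da (hc : c.PopAssumptions) (a : Bool) : Measurable (c.Da a) := by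
  cases a
  exacts [hc.mD0, hc.mD1]

theorem memLp_Da (hc : c.PopAssumptions) (a : Bool) (p : ENNReal) (μ : Measure Ω)
    [IsFiniteMeasure μ] : MemLp (c.Da a) p μ :=
  .of_bound (measurable_Da hc a).aestronglyMeasurable 1 <| .of_forall fun ω => by
    rcases Da_eq_zero_or_one hc a ω with h | h <;> simp [h]

theorem memLp_Ya (hc : c.PopAssumptions) (a : Bool) : MemLp (c.Ya a) 2 c.P := by
  have hY1 := (memLp_two_iff_integrable_sq hc.mY1.aestronglyMeasurable).2 hc.intY1sq
  have hY0 := (memLp_two_iff_integrable_sq hc.mY0.aestronglyMeasurable).2 hc.intY0sq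
  have := hc.prob
  exact ((memLp_Da hc a ⊤ c.P).mul' hY1).add
    (((memLp_const 1).sub (memLp_Da hc a ⊤ c.P)).mul' hY0)

theorem integral_psiTilt (hc : c.PopAssumptions) (Ψ : 𝒮 → (Fin d → ℝ) → ι → ℝ) (s : 𝒮)
    (j : ι) : ∫ ω, c.psiTilt Ψ s ω j ∂c.P[|c.stratum s] = 0 := by
  have := isProbabilityMeasure_cond_stratum hc s
  simp only [psiTilt, cEs_eq_integral_cond]
  rw [← average_eq_integral (μ := c.P[|c.stratum s]) (f := fun ω => Ψ s (c.X ω) j)]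
  exact integral_sub_average _ _

theorem gram_isSymm (s : 𝒮) : (c.gram Ψ s).IsSymm :=
  IsSymm.ext fun i j => by simp only [gram, of_apply, mul_comm]

theorem gram_eq_integral_cond (s : 𝒮) : c.gram Ψ s
    = .of fun i j => ∫ ω, c.psiTilt Ψ s ω i * c.psiTilt Ψ s ω j ∂c.P[|c.stratum s] := by
  simp only [gram, cEs_eq_integral_cond]

def centeredOutcome (c : CARPop Ω 𝒮 d) (a : Bool) (s : 𝒮) : Ω → ℝ := fun ω =>
  (c.Ya a ω - c.cEs s (c.Ya a)) - c.tau * (c.Da a ω - c.cEs s (c.Da a))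

theorem memLp_centeredOutcome (hc : c.PopAssumptions) (a : Bool) (s : 𝒮) :
    MemLp (c.centeredOutcome a s) 2 c.P[|c.stratum s] := by
  have := isProbabilityMeasure_cond_stratum hc s
  exact (((memLp_Ya hc a).cond (hc.strataPos s).ne').sub (memLp_const _)).sub
    (((memLp_Da hc a 2 c.P[|c.stratum s]).sub (memLp_const _)).const_mul c.tau)

def pooledCoef (c : CARPop Ω 𝒮 d) (t b : Bool → 𝒮 → ι → ℝ) (s : 𝒮) : ι → ℝ :=
  (1 - c.piS s) • (t true s - c.tau • b true s) + c.piS s • (t false s - c.tau • b false s)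

section Finite

variable [Fintype ι]

theorem gram_posDef (hΨ : c.PsiRegular Ψ) (s : 𝒮) : (c.gram Ψ s).PosDef := by
  obtain ⟨c', _, hc', -, hev⟩ := hΨ.2.2
  refine .of_dotProduct_mulVec_pos (isHermitian_iff_isSymm.2 (gram_isSymm s)) fun x hx => ?_
  have hx2 : 0 < ∑ j, x j ^ 2 := by
    obtain ⟨j, hj⟩ := Function.ne_iff.1 hx
    exact sum_pos' (fun i _ => sq_nonneg _) ⟨j, mem_univ j, pow_two_pos_of_ne_zero hj⟩
  rw [star_trivial]
  exact (mul_pos hc' hx2).trans_le (hev s x).1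

theorem measurable_psiTilt (hc : c.PopAssumptions) (hΨ : c.PsiRegular Ψ) (s : 𝒮) (j : ι) :
    Measurable fun ω => c.psiTilt Ψ s ω j :=
  ((measurable_pi_apply j).comp ((hΨ.1 s).comp hc.mX)).sub_const _

/-- Square integrability is forced by the eigenvalue bound: for a non-square-integrable
coordinate the diagonal Gram entry would be the junk value `0`. -/
theorem memLp_psiTilt (hc : c.PopAssumptions) (hΨ : c.PsiRegular Ψ) (s : 𝒮) (j : ι) :
    MemLp (fun ω => c.psiTilt Ψ s ω j) 2 c.P[|c.stratum s] := by
  refine (memLp_two_iff_integrable_sq (measurable_psiTilt hc hΨ s j).aestronglyMeasurable).2 ?_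
  by_contra hni
  have hjj : c.gram Ψ s j j = 0 := by
    rw [gram_eq_integral_cond, of_apply, integral_undef (by simpa only [sq] using hni)]
  exact (gram_posDef hΨ s).diag_pos.ne' hjj

theorem memLp_psiTilt_dotProduct (hc : c.PopAssumptions) (hΨ : c.PsiRegular Ψ) (s : 𝒮)
    (w : ι → ℝ) : MemLp (fun ω => c.psiTilt Ψ s ω ⬝ᵥ w) 2 c.P[|c.stratum s] :=
  memLp_finsetSum _ fun j _ => (memLp_psiTilt hc hΨ s j).mul_const (w j)

theorem tilt_wm_linWM [MeasurableSingletonClass 𝒮] (hc : c.PopAssumptions)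
    (hΨ : c.PsiRegular Ψ) {s : 𝒮} {ω : Ω} (hω : c.S ω = s) (t : Bool → 𝒮 → ι → ℝ) (a : Bool) :
    c.tilt (c.wm (linWM Ψ t) a) ω = c.psiTilt Ψ s ω ⬝ᵥ t a s := by
  have := isProbabilityMeasure_cond_stratum hc s
  have hΨX : ∀ j, Integrable (fun ω => Ψ s (c.X ω) j) c.P[|c.stratum s] := fun j =>
    ((memLp_psiTilt hc hΨ s j).integrable one_le_two).add
      (integrable_const (c.cEs s fun ω' => Ψ s (c.X ω') j)) |>.congr
      (.of_forall fun ω => by simp [psiTilt])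
  have hmean : c.cEs s (c.wm (linWM Ψ t) a)
      = (fun j => c.cEs s fun ω => Ψ s (c.X ω) j) ⬝ᵥ t a s := by
    simp only [cEs_eq_integral_cond]
    rw [← integral_dotProduct hΨX]
    refine integral_congr_ae ((ae_cond_stratum hc s).mono fun ω' hω' => ?_)
    simp [wm, linWM, hω', dotProduct]
  simp only [tilt, cES]
  rw [hω, hmean]
  simp only [wm, linWM, hω, psiTilt, dotProduct, ← sum_sub_distrib, sub_mul]

theorem piS_mul_Xi1_sq [MeasurableSingletonClass 𝒮] (hc : c.PopAssumptions)
    (hΨ : c.PsiRegular Ψ) {s : 𝒮} {ω : Ω} (hω : c.S ω = s) (t b : Bool → 𝒮 → ι → ℝ) :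
    c.piS (c.S ω) * c.Xi1 (linWM Ψ t) (linWM Ψ b) ω ^ 2
      = (c.centeredOutcome true s ω - c.psiTilt Ψ s ω ⬝ᵥ c.pooledCoef t b s) ^ 2 / c.piS s := by
  have hπ := (piS_pos hc s).ne'
  simp only [Xi1]
  rw [tilt_wm_linWM hc hΨ hω t true, tilt_wm_linWM hc hΨ hω t false,
    tilt_wm_linWM hc hΨ hω b true, tilt_wm_linWM hc hΨ hω b false]
  simp only [tilt, cES, hω, W, centeredOutcome, pooledCoef, dotProduct_add, dotProduct_sub,
    dotProduct_smul, smul_eq_mul]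
  field_simp
  ring

theorem one_sub_piS_mul_Xi0_sq [MeasurableSingletonClass 𝒮] (hc : c.PopAssumptions)
    (hΨ : c.PsiRegular Ψ) {s : 𝒮} {ω : Ω} (hω : c.S ω = s) (t b : Bool → 𝒮 → ι → ℝ) :
    (1 - c.piS (c.S ω)) * c.Xi0 (linWM Ψ t) (linWM Ψ b) ω ^ 2
      = (c.centeredOutcome false s ω - c.psiTilt Ψ s ω ⬝ᵥ c.pooledCoef t b s) ^ 2
          / (1 - c.piS s) := by
  have hπ := (sub_pos.2 (piS_lt_one hc s)).ne'
  simp only [Xi0]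
  rw [tilt_wm_linWM hc hΨ hω t true, tilt_wm_linWM hc hΨ hω t false,
    tilt_wm_linWM hc hΨ hω b true, tilt_wm_linWM hc hΨ hω b false]
  simp only [tilt, cES, hω, Z, centeredOutcome, pooledCoef, dotProduct_add, dotProduct_sub,
    dotProduct_smul, smul_eq_mul]
  field_simp
  ring

theorem integral_eq_sum_stratum [Fintype 𝒮] [MeasurableSingletonClass 𝒮]
    (hc : c.PopAssumptions) {f : Ω → ℝ} {g : 𝒮 → Ω → ℝ}
    (hfg : ∀ s ω, c.S ω = s → f ω = g s ω) (hg : ∀ s, Integrable (g s) c.P[|c.stratum s]) :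
    ∫ ω, f ω ∂c.P = ∑ s, (c.P (c.stratum s)).toReal * ∫ ω, g s ω ∂c.P[|c.stratum s] := by
  have := hc.prob
  have hfg_ae : ∀ s, f =ᵐ[c.P[|c.stratum s]] g s := fun s =>
    (ae_cond_stratum hc s).mono fun ω hω => hfg s ω hω
  rw [integral_eq_sum_cond_fiber hc.mS fun s => (hg s).congr (hfg_ae s).symm]
  exact sum_congr rfl fun s _ => by rw [smul_eq_mul, ← integral_congr_ae (hfg_ae s)]; rfl

def stratumLoss (c : CARPop Ω 𝒮 d) (Ψ : 𝒮 → (Fin d → ℝ) → ι → ℝ) (s : 𝒮) (w : ι → ℝ) : ℝ :=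
  (∫ ω, (c.centeredOutcome true s ω - c.psiTilt Ψ s ω ⬝ᵥ w) ^ 2 ∂c.P[|c.stratum s]) / c.piS s
    + (∫ ω, (c.centeredOutcome false s ω - c.psiTilt Ψ s ω ⬝ᵥ w) ^ 2 ∂c.P[|c.stratum s])
      / (1 - c.piS s)

theorem sigma1Sq_add_sigma0Sq_linWM [Fintype 𝒮] [MeasurableSingletonClass 𝒮]
    (hc : c.PopAssumptions) (hΨ : c.PsiRegular Ψ) (t b : Bool → 𝒮 → ι → ℝ) :
    c.sigma1Sq (linWM Ψ t) (linWM Ψ b) + c.sigma0Sq (linWM Ψ t) (linWM Ψ b)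
      = ∑ s, (c.P (c.stratum s)).toReal * c.stratumLoss Ψ s (c.pooledCoef t b s) := by
  have hsq : ∀ a s, Integrable
      (fun ω => (c.centeredOutcome a s ω - c.psiTilt Ψ s ω ⬝ᵥ c.pooledCoef t b s) ^ 2)
      c.P[|c.stratum s] := fun a s =>
    ((memLp_centeredOutcome hc a s).sub (memLp_psiTilt_dotProduct hc hΨ s _)).integrable_sq
  rw [sigma1Sq, sigma0Sq,
    integral_eq_sum_stratum hc (fun s ω hω => piS_mul_Xi1_sq hc hΨ hω t b)
      fun s => (hsq true s).div_const _,
    integral_eq_sum_stratum hc (fun s ω hω => one_sub_piS_mul_Xi0_sq hc hΨ hω t b)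
      fun s => (hsq false s).div_const _, ← sum_add_distrib]
  simp only [stratumLoss, integral_div, mul_add]

variable [DecidableEq ι]

theorem gram_mulVec_thetaL (hΨ : c.PsiRegular Ψ) (a : Bool) (s : 𝒮) :
    c.gram Ψ s *ᵥ c.thetaL Ψ a s = fun j => c.cEs s fun ω => c.psiTilt Ψ s ω j * c.Ya a ω := by
  rw [thetaL, mulVec_mulVec, mul_nonsing_inv _
    ((isUnit_iff_isUnit_det _).1 (gram_posDef hΨ s).isUnit), one_mulVec]

theorem gram_mulVec_betaL (hΨ : c.PsiRegular Ψ) (a : Bool) (s : 𝒮) :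
    c.gram Ψ s *ᵥ c.betaL Ψ a s = fun j => c.cEs s fun ω => c.psiTilt Ψ s ω j * c.Da a ω := by
  rw [betaL, mulVec_mulVec, mul_nonsing_inv _
    ((isUnit_iff_isUnit_det _).1 (gram_posDef hΨ s).isUnit), one_mulVec]

theorem integral_centeredOutcome_mul_psiTilt (hc : c.PopAssumptions) (hΨ : c.PsiRegular Ψ)
    (a : Bool) (s : 𝒮) :
    (fun j => ∫ ω, c.centeredOutcome a s ω * c.psiTilt Ψ s ω j ∂c.P[|c.stratum s])
      = c.gram Ψ s *ᵥ (c.thetaL Ψ a s - c.tau • c.betaL Ψ a s) := by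
  have := isProbabilityMeasure_cond_stratum hc s
  have hY := (memLp_Ya hc a).cond (hc.strataPos s).ne'
  have hD := memLp_Da hc a 2 c.P[|c.stratum s]
  ext j
  have hψ := memLp_psiTilt hc hΨ s j
  have hψY : Integrable (fun ω => c.Ya a ω * c.psiTilt Ψ s ω j) c.P[|c.stratum s] :=
    hY.integrable_mul hψ
  have hψD : Integrable (fun ω => c.tau * (c.Da a ω * c.psiTilt Ψ s ω j)) c.P[|c.stratum s] :=
    (hD.integrable_mul hψ).const_mul c.tau
  have hdiff : Integrable (fun ω => c.Ya a ω * c.psiTilt Ψ s ω j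
      - c.tau * (c.Da a ω * c.psiTilt Ψ s ω j)) c.P[|c.stratum s] := hψY.sub hψD
  calc ∫ ω, c.centeredOutcome a s ω * c.psiTilt Ψ s ω j ∂c.P[|c.stratum s]
      = ∫ ω, (c.Ya a ω * c.psiTilt Ψ s ω j - c.tau * (c.Da a ω * c.psiTilt Ψ s ω j))
          - (c.cEs s (c.Ya a) - c.tau * c.cEs s (c.Da a)) * c.psiTilt Ψ s ω j
          ∂c.P[|c.stratum s] := by
        congr 1 with ω
        simp only [centeredOutcome]
        ring
    _ = _ := by
        rw [integral_sub hdiff (hψ.integrable one_le_two |>.const_mul _),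
          integral_sub hψY hψD, integral_const_mul, integral_const_mul, integral_psiTilt hc Ψ,
          mulVec_sub, mulVec_smul, gram_mulVec_thetaL hΨ, gram_mulVec_betaL hΨ]
        simp [cEs_eq_integral_cond, mul_comm]

theorem stratumLoss_eq_add (hc : c.PopAssumptions) (hΨ : c.PsiRegular Ψ) (s : 𝒮)
    (w : ι → ℝ) : c.stratumLoss Ψ s w
      = c.stratumLoss Ψ s (c.pooledCoef (c.thetaL Ψ) (c.betaL Ψ) s)
        + (w - c.pooledCoef (c.thetaL Ψ) (c.betaL Ψ) s) ⬝ᵥ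
            c.gram Ψ s *ᵥ (w - c.pooledCoef (c.thetaL Ψ) (c.betaL Ψ) s)
          / (c.piS s * (1 - c.piS s)) := by
  set w₀ := c.pooledCoef (c.thetaL Ψ) (c.betaL Ψ) s
  have hπ := (piS_pos hc s).ne'
  have hπ' := (sub_pos.2 (piS_lt_one hc s)).ne'
  have hexpand : ∀ w, c.stratumLoss Ψ s w
      = (∫ ω, c.centeredOutcome true s ω ^ 2 ∂c.P[|c.stratum s]) / c.piS s
        + (∫ ω, c.centeredOutcome false s ω ^ 2 ∂c.P[|c.stratum s]) / (1 - c.piS s)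
        + (w ⬝ᵥ c.gram Ψ s *ᵥ w - 2 * (w ⬝ᵥ c.gram Ψ s *ᵥ w₀))
          / (c.piS s * (1 - c.piS s)) := by
    intro w
    rw [stratumLoss, integral_sq_sub_dotProduct (memLp_centeredOutcome hc true s)
      (memLp_psiTilt hc hΨ s), integral_sq_sub_dotProduct (memLp_centeredOutcome hc false s)
      (memLp_psiTilt hc hΨ s), ← gram_eq_integral_cond,
      integral_centeredOutcome_mul_psiTilt hc hΨ, integral_centeredOutcome_mul_psiTilt hc hΨ]
    simp only [w₀, pooledCoef, mulVec_add, mulVec_smul, dotProduct_add, dotProduct_smul,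
      smul_eq_mul, dotProduct_comm _ w]
    field_simp
    ring
  rw [hexpand w, hexpand w₀, (gram_isSymm s).sub_dotProduct_mulVec_sub]
  ring

def stratumExcess (c : CARPop Ω 𝒮 d) (Ψ : 𝒮 → (Fin d → ℝ) → ι → ℝ)
    (t b : Bool → 𝒮 → ι → ℝ) (s : 𝒮) : ℝ :=
  (c.P (c.stratum s)).toReal
    * ((c.pooledCoef t b s - c.pooledCoef (c.thetaL Ψ) (c.betaL Ψ) s) ⬝ᵥ
        c.gram Ψ s *ᵥ (c.pooledCoef t b s - c.pooledCoef (c.thetaL Ψ) (c.betaL Ψ) s)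
      / (c.piS s * (1 - c.piS s)))

theorem sigmaSqLin_eq_add [Fintype 𝒮] [MeasurableSingletonClass 𝒮] (hc : c.PopAssumptions)
    (hΨ : c.PsiRegular Ψ) (t b : Bool → 𝒮 → ι → ℝ) :
    c.sigmaSqLin Ψ t b = c.sigmaSqLin Ψ (c.thetaL Ψ) (c.betaL Ψ)
      + (∑ s, c.stratumExcess Ψ t b s) / (c.P c.compliers).toReal ^ 2 := by
  simp only [sigmaSqLin, sigmaSq, sigma1Sq_add_sigma0Sq_linWM hc hΨ,
    stratumLoss_eq_add hc hΨ _ (c.pooledCoef t b _), mul_add, sum_add_distrib, stratumExcess]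
  ring

theorem stratumExcess_nonneg (hc : c.PopAssumptions) (hΨ : c.PsiRegular Ψ)
    (t b : Bool → 𝒮 → ι → ℝ) (s : 𝒮) : 0 ≤ c.stratumExcess Ψ t b s := by
  have hq := (gram_posDef hΨ s).posSemidef.dotProduct_mulVec_nonneg
    (c.pooledCoef t b s - c.pooledCoef (c.thetaL Ψ) (c.betaL Ψ) s)
  have := piS_pos hc s
  have := sub_pos.2 (piS_lt_one hc s)
  rw [star_trivial] at hq
  unfold stratumExcess
  positivity

theorem stratumExcess_eq_zero_iff (hc : c.PopAssumptions) (hΨ : c.PsiRegular Ψ)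
    (t b : Bool → 𝒮 → ι → ℝ) (s : 𝒮) : c.stratumExcess Ψ t b s = 0
      ↔ c.pooledCoef t b s = c.pooledCoef (c.thetaL Ψ) (c.betaL Ψ) s := by
  have hp := toReal_measure_stratum_pos hc s
  have hπ := mul_pos (piS_pos hc s) (sub_pos.2 (piS_lt_one hc s))
  rw [← sub_eq_zero (a := c.pooledCoef t b s), stratumExcess, mul_eq_zero, div_eq_zero_iff,
    or_iff_left hπ.ne', or_iff_right hp.ne']
  refine ⟨fun hq => by_contra fun hδ => ?_,
    fun hδ => by rw [hδ, mulVec_zero, dotProduct_zero]⟩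
  have hpos := (gram_posDef hΨ s).dotProduct_mulVec_pos hδ
  rw [star_trivial, hq] at hpos
  exact lt_irrefl 0 hpos

theorem sigmaSqLin_thetaL_betaL_le [Fintype 𝒮] [MeasurableSingletonClass 𝒮]
    (hc : c.PopAssumptions) (hΨ : c.PsiRegular Ψ) (t b : Bool → 𝒮 → ι → ℝ) :
    c.sigmaSqLin Ψ (c.thetaL Ψ) (c.betaL Ψ) ≤ c.sigmaSqLin Ψ t b := by
  rw [sigmaSqLin_eq_add hc hΨ t b]
  exact le_add_of_nonneg_right (div_nonneg
    (sum_nonneg fun s _ => stratumExcess_nonneg hc hΨ t b s) (sq_nonneg _))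

theorem sigmaSqLin_le_thetaL_betaL_iff [Fintype 𝒮] [MeasurableSingletonClass 𝒮]
    (hc : c.PopAssumptions) (hΨ : c.PsiRegular Ψ) (t b : Bool → 𝒮 → ι → ℝ) :
    c.sigmaSqLin Ψ t b ≤ c.sigmaSqLin Ψ (c.thetaL Ψ) (c.betaL Ψ)
      ↔ ∀ s, c.pooledCoef t b s = c.pooledCoef (c.thetaL Ψ) (c.betaL Ψ) s := by
  have hnonneg := stratumExcess_nonneg hc hΨ t b
  rw [sigmaSqLin_eq_add hc hΨ t b, add_le_iff_nonpos_right,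
    div_le_iff₀ (pow_pos (toReal_measure_compliers_pos hc) 2), zero_mul,
    (sum_nonneg fun s _ => hnonneg s).ge_iff_eq',
    Fintype.sum_eq_zero_iff_of_nonneg hnonneg, funext_iff]
  exact forall_congr' (stratumExcess_eq_zero_iff hc hΨ t b)

end Finite

end CARPop

open CARPop in
/-- Characterization of the set of optimal linear adjustment coefficients:
`(t, b)` minimizes the asymptotic variance `σ²_lin` over all linear coefficient collections
iff for every stratum `s`,
`√((1−π(s))/π(s))·(t₁ₛ − τ·b₁ₛ) + √(π(s)/(1−π(s)))·(t₀ₛ − τ·b₀ₛ)` agrees with the same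
combination of `(θᴸ, βᴸ)`.  In particular `(θᴸ, βᴸ)` is a minimizer. -/
theorem stmt3 {Ω : Type*} [MeasurableSpace Ω] {𝒮 : Type*} [Fintype 𝒮] [MeasurableSpace 𝒮]
    [MeasurableSingletonClass 𝒮] {d k : ℕ}
    (c : CARPop Ω 𝒮 d) (hc : PopAssumptions c)
    (Ψ : 𝒮 → (Fin d → ℝ) → Fin k → ℝ) (hΨ : c.PsiRegular Ψ) :
    (∀ t b : Bool → 𝒮 → Fin k → ℝ,
      ((∀ t' b' : Bool → 𝒮 → Fin k → ℝ, c.sigmaSqLin Ψ t b ≤ c.sigmaSqLin Ψ t' b') ↔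
        (∀ s : 𝒮,
          Real.sqrt ((1 - c.piS s) / c.piS s) • (t true s - c.tau • b true s)
              + Real.sqrt (c.piS s / (1 - c.piS s)) • (t false s - c.tau • b false s)
            = Real.sqrt ((1 - c.piS s) / c.piS s)
                  • (c.thetaL Ψ true s - c.tau • c.betaL Ψ true s)
              + Real.sqrt (c.piS s / (1 - c.piS s))
                  • (c.thetaL Ψ false s - c.tau • c.betaL Ψ false s)))) ∧
    (∀ t' b' : Bool → 𝒮 → Fin k → ℝ,
      c.sigmaSqLin Ψ (c.thetaL Ψ) (c.betaL Ψ) ≤ c.sigmaSqLin Ψ t' b') := by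
  refine ⟨fun t b => ?_, sigmaSqLin_thetaL_betaL_le hc hΨ⟩
  calc (∀ t' b', c.sigmaSqLin Ψ t b ≤ c.sigmaSqLin Ψ t' b')
      ↔ c.sigmaSqLin Ψ t b ≤ c.sigmaSqLin Ψ (c.thetaL Ψ) (c.betaL Ψ) :=
        ⟨fun h => h _ _, fun h t' b' => h.trans (sigmaSqLin_thetaL_betaL_le hc hΨ t' b')⟩
    _ ↔ ∀ s, c.pooledCoef t b s = c.pooledCoef (c.thetaL Ψ) (c.betaL Ψ) s :=
        sigmaSqLin_le_thetaL_betaL_iff hc hΨ t b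
    _ ↔ _ := forall_congr' fun s =>
        (sqrt_div_smul_add_sqrt_div_smul_eq_iff (piS_pos hc s) (piS_lt_one hc s) _ _ _ _).symm
end
end
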